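/- arXiv:1501.04235 — 5 statements merged into one kernel-verified Lean document; each statement's English description precedes it below -/
import Mathlib

section
/- Let m : ℝ² → ℝ, l : ℝ → ℝ, n : ℝ → ℝ be smooth functions with m(0,0) = 1, and define f(x,y) = x·y·m(x,y) + x⁴·l(x) + y⁴·n(y). Then there exist ε > 0 and a smooth function g : (−ε, ε) → ℝ with g(0) = −l(0) such that for all |x| < ε, f(x, x³·g(x)) = 0. -/
/-!
Substituting `y = x³z` turns `f(x, y) = 0` into `x⁴ F(x, z) = 0` with
`F(x, z) = z m(x, x³z) + l(x) + x⁸ z⁴ n(x³z)`. Since `F(0, z) = z + l(0)`, we have `∂_z F = 1` at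
`(0, -l(0))`, and the implicit function theorem yields a smooth root `z = g(x)` of `F(x, z) = 0`
near `x = 0`.
-/

open Topology ContinuousLinearMap

theorem ContinuousLinearMap.isOpen_setOf_isInvertible {𝕜 E F : Type*} [NontriviallyNormedField 𝕜]
    [NormedAddCommGroup E] [NormedSpace 𝕜 E] [CompleteSpace E]
    [NormedAddCommGroup F] [NormedSpace 𝕜 F] :
    IsOpen {A : E →L[𝕜] F | A.IsInvertible} :=
  ContinuousLinearEquiv.isOpen

section ImplicitFunction

variable {𝕜 : Type*} [RCLike 𝕜]
  {E₁ : Type*} [NormedAddCommGroup E₁] [NormedSpace 𝕜 E₁] [CompleteSpace E₁]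
  {E₂ : Type*} [NormedAddCommGroup E₂] [NormedSpace 𝕜 E₂] [CompleteSpace E₂]
  {F : Type*} [NormedAddCommGroup F] [NormedSpace 𝕜 F] [CompleteSpace F]
  {f : E₁ × E₂ → F}

theorem HasStrictFDerivAt.exists_hasFDerivAt_prod_fst {f' : E₁ × E₂ →L[𝕜] F} {p : E₁ × E₂}
    (hf : HasStrictFDerivAt f f' p) (hp : (f' ∘L inr 𝕜 E₁ E₂).IsInvertible) :
    ∃ e : (E₁ × E₂) ≃L[𝕜] F × E₁, HasFDerivAt (fun q => (f q, q.1)) (e : E₁ × E₂ →L[𝕜] F × E₁) p :=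
  ⟨_, (hf.implicitFunctionDataOfProdDomain hp).hasStrictFDerivAt.hasFDerivAt⟩

/- `ContDiffAt.contDiffAt_implicitFunction` only gives smoothness at the base point, which for
`n = ∞` does not propagate to a neighbourhood; instead we invert the graph map `p ↦ (f p, p.1)` at
every point where `∂₂f` is still invertible. -/
theorem ContDiff.exists_contDiffOn_implicitFunction {n : WithTop ℕ∞} (hf : ContDiff 𝕜 n f)
    (hn : n ≠ 0) {u : E₁ × E₂} (hu : (fderiv 𝕜 f u ∘L inr 𝕜 E₁ E₂).IsInvertible) :
    ∃ U ∈ 𝓝 u.1, ∃ ψ : E₁ → E₂, ContDiffOn 𝕜 n ψ U ∧ ψ u.1 = u.2 ∧ ∀ x ∈ U, f (x, ψ x) = f u := by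
  set P := ((hf.contDiffAt.hasStrictFDerivAt hn).implicitFunctionDataOfProdDomain hu)
    |>.toOpenPartialHomeomorph
  have hP : ⇑P = fun q => (f q, q.1) := rfl
  have hu_source : u ∈ P.source := ImplicitFunctionData.pt_mem_toOpenPartialHomeomorph_source _
  have hP_symm : P.symm (f u, u.1) = u := P.left_inv hu_source
  set V := P.target ∩ P.symm ⁻¹' {q | (fderiv 𝕜 f q ∘L inr 𝕜 E₁ E₂).IsInvertible}
  have hV : IsOpen V := P.isOpen_inter_preimage_symm <|
    isOpen_setOf_isInvertible.preimage <|
      (hf.continuous_fderiv hn).clm_comp continuous_const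
  have hV_mem : (f u, u.1) ∈ V := ⟨P.map_source hu_source, by simpa [hP_symm] using hu⟩
  refine ⟨(fun x => (f u, x)) ⁻¹' V, (hV.preimage (by fun_prop)).mem_nhds hV_mem,
    fun x => (P.symm (f u, x)).2, fun x hx => ?_, by simp [hP_symm], fun x hx => ?_⟩
  · obtain ⟨e, he⟩ := (hf.contDiffAt.hasStrictFDerivAt hn).exists_hasFDerivAt_prod_fst hx.2
    have hP_smooth : ContDiffAt 𝕜 n P (P.symm (f u, x)) := by
      rw [hP]
      exact (hf.prodMk contDiff_fst).contDiffAt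
    exact (contDiffAt_snd.comp x <| (P.contDiffAt_symm hx.1 he hP_smooth).comp x <|
      contDiffAt_const.prodMk contDiffAt_id).contDiffWithinAt
  · have h := P.right_inv hx.1
    rw [hP] at h
    simp only [Prod.ext_iff] at h
    rw [show (x, (P.symm (f u, x)).2) = P.symm (f u, x) from Prod.ext h.2.symm rfl]
    exact h.1

end ImplicitFunction

section CubicBlowUp

variable (m : ℝ → ℝ → ℝ) (l n : ℝ → ℝ)

def cubicBlowUp (p : ℝ × ℝ) : ℝ :=
  p.2 * m p.1 (p.1 ^ 3 * p.2) + l p.1 + p.1 ^ 8 * p.2 ^ 4 * n (p.1 ^ 3 * p.2)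

theorem pow_four_mul_cubicBlowUp (x z : ℝ) :
    x ^ 4 * cubicBlowUp m l n (x, z) =
      x * (x ^ 3 * z) * m x (x ^ 3 * z) + x ^ 4 * l x + (x ^ 3 * z) ^ 4 * n (x ^ 3 * z) := by
  simp only [cubicBlowUp]
  ring

theorem cubicBlowUp_zero_left (z : ℝ) : cubicBlowUp m l n (0, z) = z * m 0 0 + l 0 := by
  simp [cubicBlowUp]

variable {m l n}

theorem contDiff_cubicBlowUp {k : WithTop ℕ∞} (hm : ContDiff ℝ k (fun p : ℝ × ℝ => m p.1 p.2))
    (hl : ContDiff ℝ k l) (hn : ContDiff ℝ k n) : ContDiff ℝ k (cubicBlowUp m l n) := by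
  have hy : ContDiff ℝ k fun p : ℝ × ℝ => p.1 ^ 3 * p.2 := by fun_prop
  exact ((contDiff_snd.mul (hm.comp (contDiff_fst.prodMk hy))).add (hl.comp contDiff_fst)).add
    (((contDiff_fst.pow 8).mul (contDiff_snd.pow 4)).mul (hn.comp hy))

theorem fderiv_cubicBlowUp_comp_inr {z : ℝ} (hF : DifferentiableAt ℝ (cubicBlowUp m l n) (0, z)) :
    fderiv ℝ (cubicBlowUp m l n) (0, z) ∘L inr ℝ ℝ ℝ = m 0 0 • ContinuousLinearMap.id ℝ ℝ := by
  have hline : HasFDerivAt (fun w => cubicBlowUp m l n (0, w))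
      (m 0 0 • ContinuousLinearMap.id ℝ ℝ) z := by
    have hrestrict : (fun w => cubicBlowUp m l n (0, w)) =
        fun w => (m 0 0 • ContinuousLinearMap.id ℝ ℝ) w + l 0 := by
      ext w
      simp [cubicBlowUp_zero_left, mul_comm]
    rw [hrestrict]
    exact (m 0 0 • ContinuousLinearMap.id ℝ ℝ).hasFDerivAt.add_const (l 0)
  exact (hF.hasFDerivAt.comp z (hasFDerivAt_prodMk_right 0 z)).unique hline

end CubicBlowUp

theorem stmt1 (m : ℝ → ℝ → ℝ) (l n : ℝ → ℝ)
    (hm : ContDiff ℝ (⊤ : ℕ∞) (fun p : ℝ × ℝ => m p.1 p.2))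
    (hl : ContDiff ℝ (⊤ : ℕ∞) l) (hn : ContDiff ℝ (⊤ : ℕ∞) n)
    (hm0 : m 0 0 = 1)
    (f : ℝ → ℝ → ℝ)
    (hf : f = fun x y => x * y * m x y + x ^ 4 * l x + y ^ 4 * n y) :
    ∃ ε > (0 : ℝ), ∃ g : ℝ → ℝ,
      ContDiffOn ℝ (⊤ : ℕ∞) g (Set.Ioo (-ε) ε) ∧ g 0 = -l 0 ∧
      ∀ x : ℝ, |x| < ε → f x (x ^ 3 * g x) = 0 := by
  have hF := contDiff_cubicBlowUp hm hl hn
  have hF_zero : cubicBlowUp m l n (0, -l 0) = 0 := by simp [cubicBlowUp_zero_left, hm0]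
  have hinv : (fderiv ℝ (cubicBlowUp m l n) (0, -l 0) ∘L inr ℝ ℝ ℝ).IsInvertible := by
    rw [fderiv_cubicBlowUp_comp_inr (hF.differentiable (by simp)).differentiableAt, hm0, one_smul]
    exact isInvertible_equiv (f := ContinuousLinearEquiv.refl ℝ ℝ)
  obtain ⟨U, hU, g, hg_smooth, hg_zero, hg_root⟩ :=
    hF.exists_contDiffOn_implicitFunction (by simp) hinv
  obtain ⟨ε, hε, hball⟩ := Metric.mem_nhds_iff.1 hU
  refine ⟨ε, hε, g, ?_, hg_zero, fun x hx => ?_⟩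
  · exact hg_smooth.mono (by simpa [Real.ball_eq_Ioo] using hball)
  · have hxU : x ∈ U := hball (by simpa using hx)
    rw [hf]
    beta_reduce
    rw [← pow_four_mul_cubicBlowUp, hg_root x hxU, hF_zero, mul_zero]
end

section
/- Let A, B, C : ℝ → ℝ be three times continuously differentiable functions with A(0) = B(0) = C(0) = 0 and satisfying A′(x)·C′(x) = B′(x)² for all x. Then J := A·C − B² vanishes to fourth order at 0, i.e. J(0) = J′(0) = J″(0) = J‴(0) = 0. -/
/-!
When `f x = g x = 0`, Leibniz's rule leaves only the mixed terms in the derivatives of `f * g`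
at `x`: `(f g)'(x) = 0`, `(f g)''(x) = 2 f'(x) g'(x)` and `(f g)'''(x) = 3 (f' g')'(x)`.
Applied to `A * C` and `B * B`, the identity `A' C' = B' B'` of functions makes the second and
third derivatives of the two products agree at `0`.
-/

section
variable {𝕜 : Type*} [NontriviallyNormedField 𝕜] {𝔸 : Type*} [NormedRing 𝔸] [NormedAlgebra 𝕜 𝔸]
  {f g : 𝕜 → 𝔸} {x : 𝕜}

theorem deriv_mul_of_apply_eq_zero (hf : DifferentiableAt 𝕜 f x) (hg : DifferentiableAt 𝕜 g x)
    (hf0 : f x = 0) (hg0 : g x = 0) :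
    deriv (f * g) x = 0 := by
  simp [deriv_mul hf hg, hf0, hg0]

theorem iteratedDeriv_two_mul_of_apply_eq_zero (hf : ContDiff 𝕜 2 f) (hg : ContDiff 𝕜 2 g)
    (hf0 : f x = 0) (hg0 : g x = 0) :
    iteratedDeriv 2 (f * g) x = 2 * (deriv f * deriv g) x := by
  rw [iteratedDeriv_mul hf.contDiffAt hg.contDiffAt]
  simp [Finset.sum_range_succ, hf0, hg0, mul_assoc]

theorem iteratedDeriv_three_mul_of_apply_eq_zero (hf : ContDiff 𝕜 3 f) (hg : ContDiff 𝕜 3 g)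
    (hf0 : f x = 0) (hg0 : g x = 0) :
    iteratedDeriv 3 (f * g) x = 3 * deriv (deriv f * deriv g) x := by
  have hf' : ContDiff 𝕜 1 (deriv f) := (hf.deriv' (n := 2)).of_le (by norm_num)
  have hg' : ContDiff 𝕜 1 (deriv g) := (hg.deriv' (n := 2)).of_le (by norm_num)
  rw [iteratedDeriv_mul hf.contDiffAt hg.contDiffAt, ← iteratedDeriv_one,
    iteratedDeriv_mul hf'.contDiffAt hg'.contDiffAt]
  simp [Finset.sum_range_succ, hf0, hg0, ← iteratedDeriv_succ', mul_add, mul_assoc]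

end

theorem stmt2 (A B C : ℝ → ℝ)
    (hA : ContDiff ℝ 3 A) (hB : ContDiff ℝ 3 B) (hC : ContDiff ℝ 3 C)
    (hA0 : A 0 = 0) (hB0 : B 0 = 0) (hC0 : C 0 = 0)
    (hrel : ∀ x : ℝ, deriv A x * deriv C x = (deriv B x) ^ 2)
    (J : ℝ → ℝ) (hJ : J = fun x => A x * C x - (B x) ^ 2) :
    J 0 = 0 ∧ deriv J 0 = 0 ∧ iteratedDeriv 2 J 0 = 0 ∧ iteratedDeriv 3 J 0 = 0 := by
  have hJ' : J = A * C - B * B := by rw [hJ]; ext x; simp [sq]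
  have hrel' : deriv A * deriv C = deriv B * deriv B := by ext x; simp [hrel, sq]
  have hAC : ContDiff ℝ 3 (A * C) := hA.mul hC
  have hBB : ContDiff ℝ 3 (B * B) := hB.mul hB
  refine ⟨by simp [hJ, hA0, hB0, hC0], ?_, ?_, ?_⟩
  · have dA : Differentiable ℝ A := hA.differentiable (by norm_num)
    have dB : Differentiable ℝ B := hB.differentiable (by norm_num)
    have dC : Differentiable ℝ C := hC.differentiable (by norm_num)
    rw [hJ', deriv_sub (hAC.differentiable (by norm_num) 0) (hBB.differentiable (by norm_num) 0),
      deriv_mul_of_apply_eq_zero (dA 0) (dC 0) hA0 hC0,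
      deriv_mul_of_apply_eq_zero (dB 0) (dB 0) hB0 hB0, sub_self]
  · have hA2 : ContDiff ℝ 2 A := hA.of_le (by norm_num)
    have hB2 : ContDiff ℝ 2 B := hB.of_le (by norm_num)
    have hC2 : ContDiff ℝ 2 C := hC.of_le (by norm_num)
    rw [hJ', iteratedDeriv_sub (hAC.of_le (m := 2) (by norm_num)).contDiffAt
        (hBB.of_le (m := 2) (by norm_num)).contDiffAt,
      iteratedDeriv_two_mul_of_apply_eq_zero hA2 hC2 hA0 hC0,
      iteratedDeriv_two_mul_of_apply_eq_zero hB2 hB2 hB0 hB0, hrel', sub_self]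
  · rw [hJ', iteratedDeriv_sub hAC.contDiffAt hBB.contDiffAt,
      iteratedDeriv_three_mul_of_apply_eq_zero hA hC hA0 hC0,
      iteratedDeriv_three_mul_of_apply_eq_zero hB hB hB0 hB0, hrel', sub_self]
end

section
/- Work in 2-dimensional Minkowski space with inner product η(x,y) = −x⁰y⁰ + x¹y¹. Let u₊, u₋ be unit timelike vectors (η(u±,u±) = −1), N a unit spacelike vector (η(N,N) = 1), f ≠ 0 a real number, and p₊, p₋, h₊, h₋ real numbers. Define v± by −η(u±, N) = f·v±. If f·h₊·u₊ − p₊·N = f·h₋·u₋ − p₋·N, then h₊² − h₋² = (p₊ − p₋)·(h₊v₊ + h₋v₋). -/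
/-!
Write `W` for the common value of the two sides of the momentum jump condition. Pairing `W` with
`N` gives `p₊ - p₋ = -f² (h₊v₊ - h₋v₋)`, and pairing `W` with itself gives
`-f²h₊² + 2f²h₊p₊v₊ + p₊² = -f²h₋² + 2f²h₋p₋v₋ + p₋²`. Substituting the first identity into the
difference of the two sides of the second leaves `f²` times the Taub adiabat, and `f ≠ 0` lets us cancel `f²`.
-/

/-- The 2-dimensional Minkowski inner product `η(x,y) = -x⁰y⁰ + x¹y¹`. -/
def mink2 (a b : ℝ × ℝ) : ℝ := -(a.1 * b.1) + a.2 * b.2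

namespace LinearMap.BilinForm

variable {𝕜 V : Type*} [Field 𝕜] [AddCommGroup V] [Module 𝕜 V] (B : LinearMap.BilinForm 𝕜 V)

theorem apply_smul_sub_smul_left (a p : 𝕜) (u N : V) :
    B (a • u - p • N) N = a * B u N - p * B N N := by
  simp only [map_sub, map_smul, LinearMap.sub_apply, LinearMap.smul_apply, smul_eq_mul]

theorem apply_smul_sub_smul_self (hB : B.IsSymm) (a p : 𝕜) (u N : V) :
    B (a • u - p • N) (a • u - p • N) = a ^ 2 * B u u - 2 * a * p * B u N + p ^ 2 * B N N := by
  simp only [map_sub, map_smul, LinearMap.sub_apply, LinearMap.smul_apply, smul_eq_mul,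
    hB.eq N u]
  ring

theorem taub_adiabat (hB : B.IsSymm) {uP uM N : V} {f pP pM hP hM vP vM : 𝕜}
    (huP : B uP uP = -1) (huM : B uM uM = -1) (hN : B N N = 1) (hf : f ≠ 0)
    (hvP : -B uP N = f * vP) (hvM : -B uM N = f * vM)
    (heq : (f * hP) • uP - pP • N = (f * hM) • uM - pM • N) :
    hP ^ 2 - hM ^ 2 = (pP - pM) * (hP * vP + hM * vM) := by
  have normal : pP - pM = -f ^ 2 * (hP * vP - hM * vM) := by
    have h := congrArg (B · N) heq
    simp only [apply_smul_sub_smul_left] at h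
    linear_combination -h - (f * hP) * hvP + (f * hM) * hvM + (pM - pP) * hN
  have selfPairing : -f ^ 2 * hP ^ 2 + 2 * f ^ 2 * hP * pP * vP + pP ^ 2
      = -f ^ 2 * hM ^ 2 + 2 * f ^ 2 * hM * pM * vM + pM ^ 2 := by
    have h := congrArg (fun W => B W W) heq
    simp only [apply_smul_sub_smul_self B hB] at h
    linear_combination h - (f ^ 2 * hP ^ 2) * huP + (f ^ 2 * hM ^ 2) * huM
      - (2 * f * hP * pP) * hvP + (2 * f * hM * pM) * hvM + (pM ^ 2 - pP ^ 2) * hN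
  refine mul_left_cancel₀ (pow_ne_zero 2 hf) ?_
  linear_combination -selfPairing + (pP + pM) * normal

end LinearMap.BilinForm

def mink2Form : LinearMap.BilinForm ℝ (ℝ × ℝ) :=
  LinearMap.mk₂ ℝ mink2
    (fun _ _ _ => by simp only [mink2, Prod.fst_add, Prod.snd_add]; ring)
    (fun _ _ _ => by simp only [mink2, Prod.smul_fst, Prod.smul_snd, smul_eq_mul]; ring)
    (fun _ _ _ => by simp only [mink2, Prod.fst_add, Prod.snd_add]; ring)
    (fun _ _ _ => by simp only [mink2, Prod.smul_fst, Prod.smul_snd, smul_eq_mul]; ring)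

theorem mink2Form_isSymm : mink2Form.IsSymm :=
  ⟨fun a b => by simp only [mink2Form, LinearMap.mk₂_apply, mink2]; ring⟩

theorem stmt4 (uP uM N : ℝ × ℝ) (f pP pM hP hM vP vM : ℝ)
    (huP : mink2 uP uP = -1) (huM : mink2 uM uM = -1) (hN : mink2 N N = 1)
    (hf : f ≠ 0)
    (hvP : -(mink2 uP N) = f * vP) (hvM : -(mink2 uM N) = f * vM)
    (heq : (f * hP) • uP - pP • N = (f * hM) • uM - pM • N) :
    hP ^ 2 - hM ^ 2 = (pP - pM) * (hP * vP + hM * vM) :=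
  mink2Form.taub_adiabat mink2Form_isSymm huP huM hN hf hvP hvM heq
end

section
/- Let f₀ : [0,ε] → ℝ be continuous, g₀(v) = ∫₀^v f₀(v′) dv′, and for j ≥ 1 let g_j(v) = ∫₀^v v′^j f₀(v′) dv′. Fix integers k ≥ 0 and l ≥ 1, and let G_{k,l} denote the l-fold iterated integral from 0 of the function v ↦ v^k g₀(v). Then G_{k,l}(v) = (k!/(k+l)!)·v^{k+l}·g₀(v) + Σ_{m=1}^{l} ((−1)^m/((m−1)!·(l−m)!))·(v^{l−m}/(k+m))·g_{k+m}(v). -/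
/-- The `l`-fold iterated integral from `0`: `iterInt 0 F = F` and
`iterInt (l+1) F v = ∫₀ᵛ iterInt l F`. -/
noncomputable def iterInt : ℕ → (ℝ → ℝ) → ℝ → ℝ
  | 0, F => F
  | (l + 1), F => fun v => ∫ t in (0:ℝ)..v, iterInt l F t

/-!
Write `E_l` for the right-hand side, for any family `g_j` with `g_j' = v ^ j f` and `g_j 0 = 0`.
Then `E_0 = v ^ k g_0`, `E_{l+1} 0 = 0` and `E_{l+1}' = E_l`, so `E_l` is the `l`-fold integral
of `v ^ k g_0`. Differentiating `E_{l+1}`, the terms containing `f` add up to `v ^ (k+l+1) f v`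
times `k!/(k+l+1)! + ∑_{m=1}^{l+1} (-1)^m / ((m-1)! (l+1-m)! (k+m))`, which vanishes by the Beta
integral identity `∑_j (-1)^j C(n,j) / (k+j+1) = n! k! / (k+n+1)!`; the latter is read off as the
`n`-th forward difference of `j ↦ 1 / (j+1)` at `k`. A continuous extension of `f₀` beyond
`[0, ε]` makes the moments `g_j` globally differentiable.
-/

open Finset intervalIntegral
open scoped Nat

theorem iterInt_eqOn {F F' : ℝ → ℝ} {b : ℝ} (h : Set.EqOn F F' (Set.Icc 0 b)) (l : ℕ) :
    Set.EqOn (iterInt l F) (iterInt l F') (Set.Icc 0 b) := by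
  induction l with
  | zero => exact h
  | succ l ih =>
    intro v hv
    refine integral_congr fun t ht => ih ?_
    rw [Set.uIcc_of_le hv.1] at ht
    exact ⟨ht.1, ht.2.trans hv.2⟩

theorem fwdDiff_iter_inv_add_one (n k : ℕ) :
    (fwdDiff 1)^[n] (fun j : ℕ => ((j : ℝ) + 1)⁻¹) k
      = (-1) ^ n * (n ! * k ! / (k + n + 1)!) := by
  induction n generalizing k with
  | zero => simp [Nat.factorial_succ]; field_simp
  | succ n ih =>
    rw [Function.iterate_succ_apply', fwdDiff, ih, ih,
      show k + 1 + n + 1 = k + (n + 1) + 1 by ring]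
    simp only [Nat.factorial_succ, Nat.cast_mul, Nat.cast_add, Nat.cast_one, ← add_assoc]
    field_simp
    ring

theorem sum_range_neg_one_pow_mul_choose_div (n k : ℕ) :
    ∑ j ∈ range (n + 1), (-1 : ℝ) ^ (n - j) * n.choose j / (k + j + 1)
      = (-1) ^ n * (n ! * k ! / (k + n + 1)!) := by
  rw [← fwdDiff_iter_inv_add_one, fwdDiff_iter_eq_sum_shift]
  simp [div_eq_mul_inv]

theorem sum_Icc_neg_one_pow_div_factorial_mul (k n : ℕ) :
    ∑ m ∈ Icc 1 (n + 1), (-1 : ℝ) ^ m / ((m - 1)! * (n + 1 - m)! : ℝ) / (k + m)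
      = -(k ! / (k + n + 1)! : ℝ) := by
  have hsign (i : ℕ) : (-1 : ℝ) ^ i * (-1) ^ i = 1 := pow_mul_pow_eq_one i (by norm_num)
  have hterm : ∀ j ∈ range (n + 1),
      (-1 : ℝ) ^ (1 + j) / ((1 + j - 1)! * (n + 1 - (1 + j))!) / (k + (1 + j : ℕ))
        = -((-1) ^ n / n ! * ((-1 : ℝ) ^ (n - j) * n.choose j / (k + j + 1))) := by
    intro j hj
    obtain ⟨i, rfl⟩ := Nat.exists_eq_add_of_le (Nat.lt_succ_iff.mp (mem_range.mp hj))
    rw [Nat.cast_choose ℝ (Nat.le_add_right j i)]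
    simp only [Nat.add_sub_cancel_left, show j + i + 1 - (1 + j) = i by omega, pow_add]
    push_cast
    field_simp
    linear_combination (k + j + 1 : ℝ) * hsign i
  rw [← Ico_add_one_right_eq_Icc, sum_Ico_eq_sum_range, Nat.add_sub_cancel, sum_congr rfl hterm,
    sum_neg_distrib, ← mul_sum, sum_range_neg_one_pow_mul_choose_div]
  field_simp
  linear_combination -hsign n

noncomputable def momentExpansion (g : ℕ → ℝ → ℝ) (k l : ℕ) (v : ℝ) : ℝ :=
  (k ! : ℝ) / (k + l)! * v ^ (k + l) * g 0 v
    + ∑ m ∈ Icc 1 l,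
        (-1 : ℝ) ^ m / ((m - 1)! * (l - m)!) * (v ^ (l - m) / (k + m)) * g (k + m) v

section momentExpansion

variable {f : ℝ → ℝ} {g : ℕ → ℝ → ℝ}

theorem continuous_momentExpansion (hg : ∀ j, Continuous (g j)) (k l : ℕ) :
    Continuous (momentExpansion g k l) := by
  unfold momentExpansion
  fun_prop

theorem hasDerivAt_momentExpansion_succ (hg : ∀ j v, HasDerivAt (g j) (v ^ j * f v) v)
    (k l : ℕ) (v : ℝ) :
    HasDerivAt (momentExpansion g k (l + 1)) (momentExpansion g k l v) v := by
  have hlead := ((hasDerivAt_pow (k + (l + 1)) v).const_mul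
    ((k ! : ℝ) / (k + (l + 1))!)).mul (hg 0 v)
  have hterm (m : ℕ) := (((hasDerivAt_pow (l + 1 - m) v).div_const ((k : ℝ) + m)).const_mul
    ((-1 : ℝ) ^ m / ((m - 1)! * (l + 1 - m)!))).mul (hg (k + m) v)
  refine (hlead.add (HasDerivAt.fun_sum fun m _ => hterm m)).congr_deriv ?_
  have hsource : ∑ m ∈ Icc 1 (l + 1), (-1 : ℝ) ^ m / ((m - 1)! * (l + 1 - m)!)
        * (v ^ (l + 1 - m) / (k + m)) * (v ^ (k + m) * f v)
      = v ^ (k + (l + 1)) * f v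
        * ∑ m ∈ Icc 1 (l + 1), (-1 : ℝ) ^ m / ((m - 1)! * (l + 1 - m)!) / (k + m) := by
    rw [mul_sum]
    refine sum_congr rfl fun m hm => ?_
    rw [show k + (l + 1) = (l + 1 - m) + (k + m) by grind, pow_add]
    ring
  have hmoment : ∑ m ∈ Icc 1 (l + 1), (-1 : ℝ) ^ m / ((m - 1)! * (l + 1 - m)!)
        * ((l + 1 - m : ℕ) * v ^ (l + 1 - m - 1) / (k + m)) * g (k + m) v
      = ∑ m ∈ Icc 1 l, (-1 : ℝ) ^ m / ((m - 1)! * (l - m)!) * (v ^ (l - m) / (k + m))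
        * g (k + m) v := by
    rw [sum_Icc_succ_top (by omega), Nat.sub_self, Nat.cast_zero, zero_mul, zero_div, mul_zero,
      zero_mul, add_zero]
    refine sum_congr rfl fun m hm => ?_
    rw [show l + 1 - m = l - m + 1 by grind, Nat.add_sub_cancel, Nat.factorial_succ]
    push_cast
    field_simp
  rw [sum_add_distrib, hsource, hmoment, sum_Icc_neg_one_pow_div_factorial_mul, momentExpansion,
    ← add_assoc k l 1, Nat.add_sub_cancel, Nat.factorial_succ]
  push_cast
  field_simp
  ring

theorem iterInt_pow_mul_eq_momentExpansion (hg : ∀ j v, HasDerivAt (g j) (v ^ j * f v) v)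
    (hg0 : ∀ j, g j 0 = 0) (k l : ℕ) :
    iterInt l (fun w => w ^ k * g 0 w) = momentExpansion g k l := by
  induction l with
  | zero => funext v; simp [iterInt, momentExpansion, Nat.factorial_ne_zero]
  | succ l ih =>
    funext v
    have hcont := continuous_momentExpansion
      (fun j => Differentiable.continuous fun v => (hg j v).differentiableAt) k l
    calc iterInt (l + 1) (fun w => w ^ k * g 0 w) v
      _ = ∫ t in (0 : ℝ)..v, momentExpansion g k l t := by rw [iterInt, ih]
      _ = momentExpansion g k (l + 1) v - momentExpansion g k (l + 1) 0 :=
          integral_eq_sub_of_hasDerivAt (fun t _ => hasDerivAt_momentExpansion_succ hg k l t)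
            (hcont.intervalIntegrable 0 v)
      _ = momentExpansion g k (l + 1) v := by simp [momentExpansion, hg0]

end momentExpansion

theorem stmt10_general (ε : ℝ) (f₀ : ℝ → ℝ)
    (hf₀ : ContinuousOn f₀ (Set.Icc 0 ε))
    (g : ℕ → ℝ → ℝ) (hg : ∀ j, g j = fun v => ∫ t in (0:ℝ)..v, t ^ j * f₀ t)
    (k l : ℕ) :
    ∀ v ∈ Set.Icc (0:ℝ) ε,
      iterInt l (fun w => w ^ k * g 0 w) v =
        ((Nat.factorial k : ℝ) / (Nat.factorial (k + l))) * v ^ (k + l) * g 0 v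
        + ∑ m ∈ Finset.Icc 1 l,
            ((-1 : ℝ) ^ m / ((Nat.factorial (m - 1) : ℝ) * (Nat.factorial (l - m) : ℝ)))
              * (v ^ (l - m) / ((k : ℝ) + (m : ℝ))) * g (k + m) v := by
  intro v hv
  have hε : 0 ≤ ε := hv.1.trans hv.2
  let F := Set.IccExtend hε ((Set.Icc 0 ε).domRestrict f₀)
  have hF : Continuous F := continuous_IccExtend_iff.2 hf₀.domRestrict
  have hFf : Set.EqOn F f₀ (Set.Icc 0 ε) := fun t ht => Set.IccExtend_of_mem hε _ ht
  let G : ℕ → ℝ → ℝ := fun j w => ∫ t in (0 : ℝ)..w, t ^ j * F t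
  have hGg (j : ℕ) : Set.EqOn (G j) (g j) (Set.Icc 0 ε) := by
    intro w hw
    rw [hg]
    refine integral_congr fun t ht => ?_
    rw [Set.uIcc_of_le hw.1] at ht
    simp only [hFf ⟨ht.1, ht.2.trans hw.2⟩]
  have hG (j : ℕ) (w : ℝ) : HasDerivAt (G j) (w ^ j * F w) w :=
    (((continuous_pow j).mul hF).integral_hasStrictDerivAt 0 w).hasDerivAt
  calc iterInt l (fun w => w ^ k * g 0 w) v = iterInt l (fun w => w ^ k * G 0 w) v :=
        (iterInt_eqOn (fun w hw => by simp only [hGg 0 hw]) l hv).symm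
    _ = momentExpansion G k l v := by
        rw [iterInt_pow_mul_eq_momentExpansion hG (fun _ => integral_same) k l]
    _ = momentExpansion g k l v := by simp only [momentExpansion, hGg _ hv]

theorem stmt10 (ε : ℝ) (hε : 0 ≤ ε) (f₀ : ℝ → ℝ)
    (hf₀ : ContinuousOn f₀ (Set.Icc 0 ε))
    (g : ℕ → ℝ → ℝ) (hg : ∀ j, g j = fun v => ∫ t in (0:ℝ)..v, t ^ j * f₀ t)
    (k l : ℕ) (hl : 1 ≤ l) :
    ∀ v ∈ Set.Icc (0:ℝ) ε,
      iterInt l (fun w => w ^ k * g 0 w) v =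
        ((Nat.factorial k : ℝ) / (Nat.factorial (k + l))) * v ^ (k + l) * g 0 v
        + ∑ m ∈ Finset.Icc 1 l,
            ((-1 : ℝ) ^ m / ((Nat.factorial (m - 1) : ℝ) * (Nat.factorial (l - m) : ℝ)))
              * (v ^ (l - m) / ((k : ℝ) + (m : ℝ))) * g (k + m) v :=
  stmt10_general ε f₀ hf₀ g hg k l
end

section
/- For every integer l ≥ 1 and every real k: l! + Σ_{m=1}^{l} C(l, m−1)·(−1)^m·∏_{i=1, i≠m}^{l+1} (k+i) = (−1)^l·(k+1)(k+2)⋯(k+l). Here C(l,m−1) is the binomial coefficient and the product runs over i = 1, …, l+1 omitting i = m. -/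
/-!
Shifting `k + 1` to `x`, the identity is the case `n = l` of
`∑_{j=0}^{n} (-1)^j C(n,j) ∏_{i ≠ j} (x + i) = n!` (the product over `0 ≤ i ≤ n`), with the
`j = n` term moved to the right-hand side. This is Lagrange interpolation of the constant `1` at
the nodes `0, -1, …, -n`; it is proved by induction on `n`: Pascal's rule splits the sum at
`n + 1` into `(x + n + 1)` times the sum at `n` evaluated at `x`, and `-x` times the sum at `n`
evaluated at `x + 1`.
-/

open Finset Nat

theorem prod_range_add_one_erase_of_lt {M : Type*} [CommMonoid M] (f : ℕ → M) {n j : ℕ}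
    (hj : j < n) :
    ∏ i ∈ (range (n + 1)).erase j, f i = (∏ i ∈ (range n).erase j, f i) * f n := by
  rw [range_add_one, erase_insert_of_ne hj.ne', prod_insert (by simp), mul_comm]

theorem prod_range_add_one_erase_add_one {M : Type*} [CommMonoid M] (f : ℕ → M) (n j : ℕ) :
    ∏ i ∈ (range (n + 1)).erase (j + 1), f i = f 0 * ∏ i ∈ (range n).erase j, f (i + 1) := by
  rw [range_add_one', erase_insert_of_ne (by omega), prod_insert (by simp),
    show j + 1 = (⟨fun i => i + 1, fun i j => by simp⟩ : ℕ ↪ ℕ) j from rfl, ← map_erase, prod_map]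
  rfl

theorem map_range_addRightEmbedding_one (n : ℕ) :
    (range n).map (addRightEmbedding 1) = Icc 1 n := by
  rw [range_eq_Ico, map_add_right_Ico, zero_add, Ico_add_one_right_eq_Icc]

theorem prod_Icc_one_erase_add_one {M : Type*} [CommMonoid M] (f : ℕ → M) (n j : ℕ) :
    ∏ i ∈ (Icc 1 n).erase (j + 1), f i = ∏ i ∈ (range n).erase j, f (i + 1) := by
  rw [← map_range_addRightEmbedding_one, show j + 1 = addRightEmbedding 1 j from rfl,
    ← map_erase, prod_map]
  rfl

theorem sum_choose_mul_neg_one_pow_mul_prod_erase {R : Type*} [CommRing R] (n : ℕ) (x : R) :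
    ∑ j ∈ range (n + 1), (n.choose j : R) * ((-1) ^ j * ∏ i ∈ (range (n + 1)).erase j, (x + i))
      = n ! := by
  induction n generalizing x with
  | zero => simp
  | succ n ih =>
    have hlow : ∑ j ∈ range (n + 1),
        (n.choose j : R) * ((-1) ^ j * ∏ i ∈ (range (n + 2)).erase j, (x + i))
          = (x + (n + 1)) * n ! := by
      rw [← ih x, mul_sum]
      refine sum_congr rfl fun j hj => ?_
      rw [prod_range_add_one_erase_of_lt _ (mem_range.1 hj)]
      push_cast
      ring
    have hhigh : ∑ j ∈ range (n + 1),
        (n.choose j : R) * ((-1) ^ (j + 1) * ∏ i ∈ (range (n + 2)).erase (j + 1), (x + i))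
          = -x * n ! := by
      rw [← ih (x + 1), mul_sum]
      refine sum_congr rfl fun j _ => ?_
      rw [prod_range_add_one_erase_add_one]
      push_cast
      simp only [add_zero, ← add_assoc, add_right_comm x 1]
      ring
    calc _ = _ := sum_choose_succ_mul (fun j _ => (-1 : R) ^ j *
            ∏ i ∈ (range (n + 2)).erase j, (x + i)) n
      _ = (x + (n + 1)) * n ! + -x * n ! := by rw [hlow, hhigh]
      _ = (n + 1)! := by push_cast [factorial_succ]; ring

theorem stmt11_general (l : ℕ) (k : ℝ) :
    (Nat.factorial l : ℝ)
      + ∑ m ∈ Finset.Icc 1 l, (Nat.choose l (m - 1) : ℝ) * (-1 : ℝ) ^ m *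
          ∏ i ∈ (Finset.Icc 1 (l + 1)).erase m, (k + (i : ℝ))
    = (-1 : ℝ) ^ l * ∏ i ∈ Finset.Icc 1 l, (k + (i : ℝ)) := by
  have key := sum_choose_mul_neg_one_pow_mul_prod_erase l (k + 1)
  rw [sum_range_succ, choose_self, range_add_one, erase_insert (by simp), ← range_add_one] at key
  have hsum : ∑ m ∈ Icc 1 l, (l.choose (m - 1) : ℝ) * (-1) ^ m *
        ∏ i ∈ (Icc 1 (l + 1)).erase m, (k + i)
      = -∑ j ∈ range l, (l.choose j : ℝ) * ((-1) ^ j *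
        ∏ i ∈ (range (l + 1)).erase j, (k + 1 + i)) := by
    rw [← map_range_addRightEmbedding_one, sum_map, ← sum_neg_distrib]
    refine sum_congr rfl fun j _ => ?_
    simp only [addRightEmbedding_apply, add_tsub_cancel_right, prod_Icc_one_erase_add_one]
    push_cast
    simp only [← add_assoc, add_right_comm k 1]
    ring
  have hprod : ∏ i ∈ Icc 1 l, (k + i) = ∏ i ∈ range l, (k + 1 + (i : ℝ)) := by
    rw [← map_range_addRightEmbedding_one, prod_map]
    refine prod_congr rfl fun i _ => ?_
    push_cast [addRightEmbedding_apply]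
    ring
  rw [hsum, hprod]
  linear_combination -key

theorem stmt11 (l : ℕ) (hl : 1 ≤ l) (k : ℝ) :
    (Nat.factorial l : ℝ)
      + ∑ m ∈ Finset.Icc 1 l, (Nat.choose l (m - 1) : ℝ) * (-1 : ℝ) ^ m *
          ∏ i ∈ (Finset.Icc 1 (l + 1)).erase m, (k + (i : ℝ))
    = (-1 : ℝ) ^ l * ∏ i ∈ Finset.Icc 1 l, (k + (i : ℝ)) :=
  stmt11_general l k
end
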